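/- arXiv:2603.14024 — 3 statements merged into one kernel-verified Lean document; each statement's English description precedes it below -/
import Mathlib

section
/- Assume f(y,m) is non-decreasing in m ∈ ℝ and non-decreasing in y ∈ ℝ, and y ↦ U(f(y,m)) is concave for each m ∈ ℝ. Then the generalized shortfall risk measure ρ^{U,f,B} is quasi-convex: for all X, Y ∈ L^p and λ ∈ [0,1], ρ^{U,f,B}(λX + (1−λ)Y) ≤ max{ ρ^{U,f,B}(X), ρ^{U,f,B}(Y) } (inequality in the extended reals). -/
open MeasureTheory Real
open scoped ENNReal

/-- Acceptance set at level `m` of the generalized shortfall: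
`𝒜^m = {Y ∈ L^p : E[U(f(Y,m))] ≥ B}`. -/
def genShortfallAccSet {Ω : Type*} [MeasurableSpace Ω] (P : Measure Ω) (p : ℝ≥0∞)
    (U : ℝ → ℝ) (f : ℝ → ℝ → ℝ) (B : ℝ) (m : ℝ) : Set (Ω → ℝ) :=
  {Y | MemLp Y p P ∧ B ≤ ∫ ω, U (f (Y ω) m) ∂P}

/-- The generalized shortfall risk measure
`ρ^{U,f,B}(X) = inf {m ∈ ℝ : X ∈ 𝒜^m}`, infimum taken in the extended reals
(so `inf ∅ = +∞`). -/
noncomputable def genShortfall {Ω : Type*} [MeasurableSpace Ω] (P : Measure Ω) (p : ℝ≥0∞)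
    (U : ℝ → ℝ) (f : ℝ → ℝ → ℝ) (B : ℝ) (X : Ω → ℝ) : EReal :=
  sInf ((fun m : ℝ => (m : EReal)) ''
    {m : ℝ | X ∈ genShortfallAccSet P p U f B m})

/-!
The sublevel set `{ρ ≤ r}` is the intersection of the acceptance sets `𝒜^z` over real `z > r`,
because `m ↦ 𝒜^m` is increasing (as `U` and `f(y, ·)` are). Each `𝒜^z` is convex: integrating
the concavity inequality of `y ↦ U(f(y, z))` shows that the expectation constraint survives convex
combinations. Intersections of convex sets are convex, so `ρ` is quasi-convex.
-/

theorem EReal.sInf_coe_image_le_iff {S : Set ℝ} (hS : IsUpperSet S) {r : EReal} :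
    sInf (((↑) : ℝ → EReal) '' S) ≤ r ↔ ∀ z : ℝ, r < z → z ∈ S := by
  refine ⟨fun h z hz => ?_, fun h => EReal.le_of_forall_lt_iff_le.mp fun z hz =>
    sInf_le ⟨z, h z hz, rfl⟩⟩
  obtain ⟨_, ⟨m, hm, rfl⟩, hmz⟩ := sInf_lt_iff.mp (h.trans_lt hz)
  exact hS (EReal.coe_lt_coe_iff.mp hmz).le hm

section GenShortfall

variable {Ω : Type*} [MeasurableSpace Ω] {P : Measure Ω} {p : ℝ≥0∞} {U : ℝ → ℝ}
  {f : ℝ → ℝ → ℝ} {B : ℝ}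

theorem genShortfallAccSet_mono (hU_mono : Monotone U) (hf_m : ∀ y, Monotone (fun m => f y m))
    (hint : ∀ Y : Ω → ℝ, MemLp Y p P → ∀ m, Integrable (fun ω => U (f (Y ω) m)) P) :
    Monotone (genShortfallAccSet P p U f B) := fun _ _ hm _ ⟨hY, hB⟩ =>
  ⟨hY, hB.trans <| integral_mono (hint _ hY _) (hint _ hY _) fun _ => hU_mono (hf_m _ hm)⟩

theorem convex_genShortfallAccSet (hUf_conc : ∀ m, ConcaveOn ℝ Set.univ (fun y => U (f y m)))
    (hint : ∀ Y : Ω → ℝ, MemLp Y p P → ∀ m, Integrable (fun ω => U (f (Y ω) m)) P) (m : ℝ) :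
    Convex ℝ (genShortfallAccSet P p U f B m) := by
  rintro X ⟨hX, hXB⟩ Y ⟨hY, hYB⟩ a b ha hb hab
  have hZ : MemLp (a • X + b • Y) p P := (hX.const_smul a).add (hY.const_smul b)
  have hIX := (hint X hX m).const_mul a
  have hIY := (hint Y hY m).const_mul b
  refine ⟨hZ, ?_⟩
  calc B = a * B + b * B := by rw [← add_mul, hab, one_mul]
    _ ≤ a * ∫ ω, U (f (X ω) m) ∂P + b * ∫ ω, U (f (Y ω) m) ∂P := by gcongr
    _ = ∫ ω, (a * U (f (X ω) m) + b * U (f (Y ω) m)) ∂P := by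
      rw [integral_add hIX hIY, integral_const_mul, integral_const_mul]
    _ ≤ ∫ ω, U (f ((a • X + b • Y) ω) m) ∂P :=
      integral_mono (hIX.add hIY) (hint _ hZ m) fun ω =>
        (hUf_conc m).2 (Set.mem_univ (X ω)) (Set.mem_univ (Y ω)) ha hb hab

theorem genShortfall_le_iff (hA : Monotone (genShortfallAccSet P p U f B)) {X : Ω → ℝ}
    {r : EReal} :
    genShortfall P p U f B X ≤ r ↔ ∀ z : ℝ, r < z → X ∈ genShortfallAccSet P p U f B z :=
  EReal.sInf_coe_image_le_iff fun _ _ hm hX => hA hm hX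

theorem genShortfall_quasiconvexOn (hU_mono : Monotone U)
    (hf_m : ∀ y, Monotone (fun m => f y m))
    (hUf_conc : ∀ m, ConcaveOn ℝ Set.univ (fun y => U (f y m)))
    (hint : ∀ Y : Ω → ℝ, MemLp Y p P → ∀ m, Integrable (fun ω => U (f (Y ω) m)) P) :
    QuasiconvexOn ℝ Set.univ (genShortfall P p U f B) := by
  intro r
  have hsublevel : {X ∈ Set.univ | genShortfall P p U f B X ≤ r} =
      ⋂ (z : ℝ) (_ : r < z), genShortfallAccSet P p U f B z := by
    ext X
    simp [genShortfall_le_iff (genShortfallAccSet_mono hU_mono hf_m hint)]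
  rw [hsublevel]
  exact convex_iInter₂ fun z _ => convex_genShortfallAccSet hUf_conc hint z

end GenShortfall

theorem genShortfall_quasiconvex_general
    {Ω : Type*} [MeasurableSpace Ω] (P : Measure Ω)
    (p : ℝ≥0∞)
    (U : ℝ → ℝ) (hU_mono : Monotone U) (B : ℝ)
    (f : ℝ → ℝ → ℝ)
    (hf_m : ∀ y : ℝ, Monotone (fun m => f y m))
    (hUf_conc : ∀ m : ℝ, ConcaveOn ℝ Set.univ (fun y => U (f y m)))
    (hint : ∀ Y : Ω → ℝ, MemLp Y p P → ∀ m : ℝ,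
      Integrable (fun ω => U (f (Y ω) m)) P)
    (X Y : Ω → ℝ)
    (l : ℝ) (hl : l ∈ Set.Icc (0 : ℝ) 1) :
    genShortfall P p U f B (fun ω => l * X ω + (1 - l) * Y ω) ≤
      max (genShortfall P p U f B X) (genShortfall P p U f B Y) :=
  (quasiconvexOn_iff_le_max.mp (genShortfall_quasiconvexOn hU_mono hf_m hUf_conc hint)).2
    (Set.mem_univ X) (Set.mem_univ Y) hl.1 (sub_nonneg.2 hl.2) (add_sub_cancel l 1)

/-- Quasi-convexity of the generalized shortfall risk measure (inequality in the
extended reals). -/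
theorem genShortfall_quasiconvex
    {Ω : Type*} [MeasurableSpace Ω] (P : Measure Ω) [IsProbabilityMeasure P]
    (p : ℝ≥0∞)
    (U : ℝ → ℝ) (hU_mono : Monotone U) (hU_conc : ConcaveOn ℝ Set.univ U)
    (hU_nc : ∃ x y : ℝ, U x ≠ U y) (B : ℝ)
    (f : ℝ → ℝ → ℝ)
    (hf_m : ∀ y : ℝ, Monotone (fun m => f y m))
    (hf_y : ∀ m : ℝ, Monotone (fun y => f y m))
    (hUf_conc : ∀ m : ℝ, ConcaveOn ℝ Set.univ (fun y => U (f y m)))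
    (hint : ∀ Y : Ω → ℝ, MemLp Y p P → ∀ m : ℝ,
      Integrable (fun ω => U (f (Y ω) m)) P)
    (X Y : Ω → ℝ) (hX : MemLp X p P) (hY : MemLp Y p P)
    (l : ℝ) (hl : l ∈ Set.Icc (0 : ℝ) 1) :
    genShortfall P p U f B (fun ω => l * X ω + (1 - l) * Y ω) ≤
      max (genShortfall P p U f B X) (genShortfall P p U f B Y) :=
  genShortfall_quasiconvex_general P p U hU_mono B f hf_m hUf_conc hint X Y l hl
end

section
/- Let q ∈ (0,1), β ≥ 0, α_q ≥ 1/(q−1), and let a : [0,T] → [0,∞) be an integrable function; set A(t,u) = ∫_t^u a(s) ds for t ≤ u, and define the hq-entropic risk measure on losses ρ^{hq}_{tu}(X) = ln_q E[exp_q((X+β)⁻ + α_q + A(t,u)) | 𝓕_t]. Then (ρ^{hq}_{tu}) satisfies h-longevity: for all 0 ≤ t ≤ u ≤ v ≤ T and every X ∈ L^∞(𝓕_u), ρ^{hq}_{tu}(X) ≤ ρ^{hq}_{tv}(X) almost surely. -/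
open MeasureTheory Real
open scoped ENNReal

/-! Since `a ≥ 0`, `A(t,u) ≤ A(t,v)`, so the integrand for `u` lies pointwise below the one for `v`,
both inside the domain `x ≥ 1/(q-1)` on which `exp_q` is nonnegative and increasing. Both are
bounded because `X` is, so monotonicity of conditional expectation and then of `ln_q` on `[0, ∞)`
give the claim. -/

/-- Tsallis generalized exponential `exp_q(x) = (1+(1-q)x)^{1/(1-q)}`. -/
noncomputable def expq (q x : ℝ) : ℝ := (1 + (1 - q) * x) ^ ((1 : ℝ) / (1 - q))

/-- Tsallis generalized logarithm `ln_q(x) = (x^{1-q} - 1)/(1-q)`. -/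
noncomputable def lnq (q x : ℝ) : ℝ := (x ^ (1 - q) - 1) / (1 - q)

lemma one_add_mul_nonneg_of_le {q x : ℝ} (hq : q < 1) (hx : 1 / (q - 1) ≤ x) :
    0 ≤ 1 + (1 - q) * x := by
  rw [div_le_iff_of_neg (by linarith)] at hx
  linarith

lemma continuous_expq {q : ℝ} (hq : q < 1) : Continuous (expq q) :=
  (Real.continuous_rpow_const (one_div_nonneg.2 (by linarith))).comp (by fun_prop)

lemma expq_nonneg {q x : ℝ} (hq : q < 1) (hx : 1 / (q - 1) ≤ x) : 0 ≤ expq q x :=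
  Real.rpow_nonneg (one_add_mul_nonneg_of_le hq hx) _

lemma expq_monotoneOn {q : ℝ} (hq : q < 1) : MonotoneOn (expq q) (Set.Ici (1 / (q - 1))) := by
  intro x hx y _ hxy
  have h1q : 0 < 1 - q := by linarith
  exact Real.rpow_le_rpow (one_add_mul_nonneg_of_le hq hx) (by gcongr) (by positivity)

lemma lnq_monotoneOn {q : ℝ} (hq : q < 1) : MonotoneOn (lnq q) (Set.Ici 0) := by
  intro x hx y _ hxy
  have h1q : 0 < 1 - q := by linarith
  unfold lnq
  gcongr

lemma MeasureTheory.MemLp.comp_top_of_continuous {Ω E F : Type*} {m0 : MeasurableSpace Ω}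
    {μ : Measure Ω} [NormedAddCommGroup E] [ProperSpace E] [NormedAddCommGroup F]
    {f : E → F} (hf : Continuous f) {X : Ω → E} (hX : MemLp X ⊤ μ) :
    MemLp (f ∘ X) ⊤ μ := by
  obtain ⟨C, hC⟩ : Filter.IsBoundedUnder (· ≤ ·) (ae μ) fun ω ↦ ‖X ω‖₊ := by
    rw [← eLpNormEssSup_lt_top_iff_isBoundedUnder, ← eLpNorm_exponent_top]
    exact hX.2
  obtain ⟨M, hM⟩ := (isCompact_closedBall (0 : E) C).exists_bound_of_continuousOn
    hf.continuousOn
  refine memLp_top_of_bound (hf.comp_aestronglyMeasurable hX.1) M ?_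
  filter_upwards [hC] with ω hω
  exact hM _ (mem_closedBall_zero_iff.2 hω)

lemma lnq_condExp_mono {Ω : Type*} {m m0 : MeasurableSpace Ω} {μ : Measure Ω} {q : ℝ}
    (hq : q < 1) {f g : Ω → ℝ} (hf : Integrable f μ) (hg : Integrable g μ)
    (hf_nonneg : 0 ≤ᵐ[μ] f) (hfg : f ≤ᵐ[μ] g) :
    ∀ᵐ ω ∂μ, lnq q (μ[f | m] ω) ≤ lnq q (μ[g | m] ω) := by
  filter_upwards [condExp_mono hf hg hfg, condExp_nonneg hf_nonneg] with ω hle h0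
  exact lnq_monotoneOn hq h0 (h0.trans hle) hle

theorem hq_entropic_h_longevity_general
    {Ω : Type*} {m0 : MeasurableSpace Ω} (P : Measure Ω) [IsProbabilityMeasure P]
    (T : ℝ) (ℱ : Filtration ℝ m0)
    (q β αq : ℝ) (hq : q ∈ Set.Ioo (0 : ℝ) 1)
    (hαq : 1 / (q - 1) ≤ αq)
    (a : ℝ → ℝ) (ha_nonneg : ∀ s, 0 ≤ a s)
    (ha_int : IntervalIntegrable a MeasureTheory.volume 0 T) :
    ∀ t u v : ℝ, 0 ≤ t → t ≤ u → u ≤ v → v ≤ T →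
      ∀ X : Ω → ℝ, StronglyMeasurable[ℱ u] X → MemLp X ⊤ P →
        ∀ᵐ ω ∂P,
          lnq q ((P[fun ω' =>
              expq q (max (-(X ω' + β)) 0 + αq + ∫ s in t..u, a s) | ℱ t]) ω)
            ≤ lnq q ((P[fun ω' =>
              expq q (max (-(X ω' + β)) 0 + αq + ∫ s in t..v, a s) | ℱ t]) ω) := by
  intro t u v ht htu huv hvT X _ hX
  have hA_nonneg : 0 ≤ ∫ s in t..u, a s :=
    intervalIntegral.integral_nonneg htu fun s _ ↦ ha_nonneg s
  have hA_mono : ∫ s in t..u, a s ≤ ∫ s in t..v, a s :=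
    intervalIntegral.integral_mono_interval le_rfl htu huv (.of_forall ha_nonneg)
      (ha_int.mono_set (Set.uIcc_subset_uIcc (Set.mem_uIcc_of_le ht (by linarith))
        (Set.mem_uIcc_of_le (by linarith) hvT)))
  have hdom : ∀ {c : ℝ}, 0 ≤ c → ∀ x : ℝ, 1 / (q - 1) ≤ max (-(x + β)) 0 + αq + c :=
    fun hc x ↦ by linarith [le_max_right (-(x + β)) 0]
  have hint : ∀ c : ℝ, Integrable (fun ω ↦ expq q (max (-(X ω + β)) 0 + αq + c)) P := fun c ↦
    (hX.comp_top_of_continuous (f := fun x ↦ expq q (max (-(x + β)) 0 + αq + c))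
      ((continuous_expq hq.2).comp (by fun_prop))).integrable le_top
  refine lnq_condExp_mono hq.2 (hint _) (hint _)
    (.of_forall fun ω ↦ expq_nonneg hq.2 (hdom hA_nonneg (X ω))) (.of_forall fun ω ↦ ?_)
  exact expq_monotoneOn hq.2 (hdom hA_nonneg (X ω)) (hdom (hA_nonneg.trans hA_mono) (X ω))
    (by linarith)

/-- The hq-entropic risk measure on losses
`ρ^{hq}_{tu}(X) = ln_q E[exp_q((X+β)⁻ + α_q + ∫_t^u a(s) ds) | 𝓕_t]`
satisfies h-longevity: `ρ^{hq}_{tu}(X) ≤ ρ^{hq}_{tv}(X)` a.s. for `t ≤ u ≤ v` and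
`X ∈ L^∞(𝓕_u)`. -/
theorem hq_entropic_h_longevity
    {Ω : Type*} {m0 : MeasurableSpace Ω} (P : Measure Ω) [IsProbabilityMeasure P]
    (T : ℝ) (hT : 0 ≤ T) (ℱ : Filtration ℝ m0)
    (q β αq : ℝ) (hq : q ∈ Set.Ioo (0 : ℝ) 1) (hβ : 0 ≤ β)
    (hαq : 1 / (q - 1) ≤ αq)
    (a : ℝ → ℝ) (ha_nonneg : ∀ s, 0 ≤ a s)
    (ha_int : IntervalIntegrable a MeasureTheory.volume 0 T) :
    ∀ t u v : ℝ, 0 ≤ t → t ≤ u → u ≤ v → v ≤ T →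
      ∀ X : Ω → ℝ, StronglyMeasurable[ℱ u] X → MemLp X ⊤ P →
        ∀ᵐ ω ∂P,
          lnq q ((P[fun ω' =>
              expq q (max (-(X ω' + β)) 0 + αq + ∫ s in t..u, a s) | ℱ t]) ω)
            ≤ lnq q ((P[fun ω' =>
              expq q (max (-(X ω' + β)) 0 + αq + ∫ s in t..v, a s) | ℱ t]) ω) :=
  hq_entropic_h_longevity_general P T ℱ q β αq hq hαq a ha_nonneg ha_int
end

section
/- Fix 0 ≤ t ≤ u ≤ T. Let Ũ_u : ℝ → ℝ be a strictly increasing, continuous, concave bijection of ℝ, U_u : ℝ → ℝ non-decreasing concave, f_u : ℝ × ℝ → ℝ, and B_{0u} ∈ ℝ, such that U_u(f_u(y,m)) − B_{0u} = Ũ_u(y) − Ũ_u(−m) for all y, m ∈ ℝ. Then for every X ∈ L^p(𝓕_u) with Ũ_u(X) integrable and every 𝓕_t-measurable random variable m_t with Ũ_u(−m_t) integrable, the following are equivalent almost surely: E[U_u(f_u(X, m_t)) | 𝓕_t] ≥ B_{0u}, and m_t ≥ − Ũ_u^{−1}( E[Ũ_u(X) | 𝓕_t] ). In particular, the h-generalized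 shortfall risk measure with data (U_u, f_u, B_{tu} = B_{0u}) coincides with the fully-dynamic certainty equivalent risk measure ρ^{Ũ_u}_{tu}(X) = − Ũ_u^{−1}( E[Ũ_u(X) | 𝓕_t] ). -/
open MeasureTheory Real
open scoped ENNReal

/-! The compatibility identity writes `U_u(f_u(X, m_t))` as `Ũ_u(X)` plus the `𝓕_t`-measurable
shift `B_{0u} - Ũ_u(-m_t)`, which pulls out of the conditional expectation; the acceptability
condition becomes `Ũ_u(-m_t) ≤ E[Ũ_u(X) | 𝓕_t]`, and applying the increasing bijection `Ũ_u⁻¹`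
turns it into the certainty-equivalent bound. -/

theorem MeasureTheory.condExp_add_of_stronglyMeasurable {α E : Type*} [NormedAddCommGroup E]
    [NormedSpace ℝ E] [CompleteSpace E] {m m₀ : MeasurableSpace α} {μ : Measure α}
    (hm : m ≤ m₀) [SigmaFinite (μ.trim hm)] {f g : α → E} (hf : Integrable f μ)
    (hg : StronglyMeasurable[m] g) (hgi : Integrable g μ) :
    μ[fun x => f x + g x | m] =ᵐ[μ] fun x => μ[f | m] x + g x := by
  have h := condExp_add hf hgi m
  rwa [condExp_of_stronglyMeasurable hm hg hgi] at h

theorem StrictMono.le_invFun_iff {α β : Type*} [LinearOrder α] [Preorder β] [Nonempty α]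
    {g : α → β} (hg : StrictMono g) (hsurj : Function.Surjective g) (a : α) (c : β) :
    a ≤ Function.invFun g c ↔ g a ≤ c := by
  rw [← hg.le_iff_le, Function.rightInverse_invFun hsurj c]

theorem h_generalizedShortfall_eq_certaintyEquivalent_dynamic_general
    {Ω : Type*} {m0 : MeasurableSpace Ω} (P : Measure Ω) [IsProbabilityMeasure P]
    (ℱ : Filtration ℝ m0)
    (t : ℝ)
    (Utu : ℝ → ℝ) (hUtu_mono : StrictMono Utu)
    (hUtu_bij : Function.Bijective Utu)
    (Uu : ℝ → ℝ)
    (fu : ℝ → ℝ → ℝ) (B0u : ℝ)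
    (hcompat : ∀ y m : ℝ, Uu (fu y m) - B0u = Utu y - Utu (-m))
    (X : Ω → ℝ)
    (hXint : Integrable (fun ω => Utu (X ω)) P)
    (mt : Ω → ℝ) (hmt_meas : StronglyMeasurable[ℱ t] mt)
    (hmtint : Integrable (fun ω => Utu (-mt ω)) P) :
    ∀ᵐ ω ∂P,
      (B0u ≤ (P[fun ω' => Uu (fu (X ω') (mt ω')) | ℱ t]) ω)
        ↔ (-(Function.invFun Utu ((P[fun ω' => Utu (X ω') | ℱ t]) ω)) ≤ mt ω) := by
  have hshift_meas : StronglyMeasurable[ℱ t] fun ω => B0u - Utu (-mt ω) :=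
    stronglyMeasurable_const.sub
      (hUtu_mono.monotone.measurable.comp hmt_meas.measurable.neg).stronglyMeasurable
  have hintegrand :
      (fun ω => Uu (fu (X ω) (mt ω))) = fun ω => Utu (X ω) + (B0u - Utu (-mt ω)) :=
    funext fun ω => by linarith [hcompat (X ω) (mt ω)]
  rw [hintegrand]
  filter_upwards [condExp_add_of_stronglyMeasurable (ℱ.le t) hXint hshift_meas
    ((integrable_const B0u).sub hmtint)] with ω hω
  rw [hω, neg_le, hUtu_mono.le_invFun_iff hUtu_bij.surjective]
  constructor <;> intro h <;> linarith

/-- Under the compatibility identity `U_u(f_u(y,m)) - B_{0u} = Ũ_u(y) - Ũ_u(-m)`,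
the acceptability condition of the h-generalized shortfall is a.s. equivalent to
`m_t ≥ -Ũ_u⁻¹(E[Ũ_u(X)|𝓕_t])`; hence the h-generalized shortfall with data
`(U_u, f_u, B_{tu} = B_{0u})` coincides with the fully-dynamic certainty
equivalent risk measure `ρ^{Ũ_u}_{tu}(X) = -Ũ_u⁻¹(E[Ũ_u(X)|𝓕_t])`. -/
theorem h_generalizedShortfall_eq_certaintyEquivalent_dynamic
    {Ω : Type*} {m0 : MeasurableSpace Ω} (P : Measure Ω) [IsProbabilityMeasure P]
    (T : ℝ) (ℱ : Filtration ℝ m0) (p : ℝ≥0∞)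
    (t u : ℝ) (h0t : 0 ≤ t) (htu : t ≤ u) (huT : u ≤ T)
    (Utu : ℝ → ℝ) (hUtu_mono : StrictMono Utu) (hUtu_cont : Continuous Utu)
    (hUtu_conc : ConcaveOn ℝ Set.univ Utu) (hUtu_bij : Function.Bijective Utu)
    (Uu : ℝ → ℝ) (hUu_mono : Monotone Uu) (hUu_conc : ConcaveOn ℝ Set.univ Uu)
    (fu : ℝ → ℝ → ℝ) (B0u : ℝ)
    (hcompat : ∀ y m : ℝ, Uu (fu y m) - B0u = Utu y - Utu (-m))
    (X : Ω → ℝ) (hX_meas : StronglyMeasurable[ℱ u] X) (hX : MemLp X p P)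
    (hXint : Integrable (fun ω => Utu (X ω)) P)
    (mt : Ω → ℝ) (hmt_meas : StronglyMeasurable[ℱ t] mt)
    (hmtint : Integrable (fun ω => Utu (-mt ω)) P) :
    ∀ᵐ ω ∂P,
      (B0u ≤ (P[fun ω' => Uu (fu (X ω') (mt ω')) | ℱ t]) ω)
        ↔ (-(Function.invFun Utu ((P[fun ω' => Utu (X ω') | ℱ t]) ω)) ≤ mt ω) :=
  h_generalizedShortfall_eq_certaintyEquivalent_dynamic_general P ℱ t Utu hUtu_mono hUtu_bij Uu fu
    B0u hcompat X hXint mt hmt_meas hmtint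
end
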